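/- Let J be a strongly stable monomial ideal and A a commutative noetherian ring, and let a₁,…,a_k ∈ A generate the unit ideal. For each i let I_i ⊆ A_{a_i}[x₀,…,xₙ] be an ideal with A_{a_i}[x] = I_i ⊕ ⟨N(J)⟩, and suppose that for all i,j the extensions of I_i and I_j to A_{a_i a_j}[x] coincide. Then there exists a unique ideal I ⊆ A[x] with A[x] = I ⊕ ⟨N(J)⟩ whose extension to A_{a_i}[x] equals I_i for every i. (The marked family is a Zariski sheaf.) -/
import Mathlib


open MvPolynomial

noncomputable section

/-- Exponent vectors of monomials in the variables `x₀, …, xₙ`. -/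
abbrev Mon (n : ℕ) : Type := Fin (n + 1) →₀ ℕ

namespace MarkedFamilies

variable {n : ℕ}

/-- The total degree of a monomial given by its exponent vector. -/
def mdeg (α : Mon n) : ℕ := α.sum fun _ e => e

/-- A monomial ideal, identified with its (upward closed) set of monomials. -/
def IsMonomialIdeal (J : Set (Mon n)) : Prop := ∀ α ∈ J, ∀ δ : Mon n, α + δ ∈ J

/-- A strongly stable monomial ideal: a monomial ideal such that for every monomial
`x^α ∈ J`, every variable `x_j` dividing `x^α` and every `i > j`, `(x_i/x_j)·x^α ∈ J`. -/
def IsStronglyStable (J : Set (Mon n)) : Prop :=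
  IsMonomialIdeal J ∧
    ∀ α ∈ J, ∀ j : Fin (n + 1), α j ≠ 0 → ∀ i : Fin (n + 1), j < i →
      α - Finsupp.single j 1 + Finsupp.single i 1 ∈ J

/-- The minimal monomial generators `B_J` of a monomial ideal `J`. -/
def minGens (J : Set (Mon n)) : Set (Mon n) :=
  {α | α ∈ J ∧ ∀ j : Fin (n + 1), α j ≠ 0 → α - Finsupp.single j 1 ∉ J}

/-- `min x^γ ≥ max x^δ`: every variable dividing `x^γ` is at least every variable
dividing `x^δ` (vacuously true when either monomial is `1`). -/
def minGeMax (γ δ : Mon n) : Prop := ∀ i ∈ γ.support, ∀ j ∈ δ.support, j ≤ i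

/-- Lexicographic order induced by `x₀ < ⋯ < xₙ`: `a <ₗₑₓ b` iff at the largest
index where they differ, `a` has the smaller exponent. -/
def lexLt (a b : Mon n) : Prop :=
  ∃ i : Fin (n + 1), a i < b i ∧ ∀ j : Fin (n + 1), i < j → a j = b j

/-- A saturated strongly stable ideal: strongly stable and no minimal generator is
divisible by `x₀`. -/
def IsSaturatedSS (J : Set (Mon n)) : Prop :=
  IsStronglyStable J ∧ ∀ α ∈ minGens J, α 0 = 0

/-- The truncation `J_{≥ t}`: the (monomial) ideal generated by the monomials of `J`
of degree at least `t`. -/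
def truncSet (J : Set (Mon n)) (t : ℕ) : Set (Mon n) := {α | α ∈ J ∧ t ≤ mdeg α}

section Ring

variable (A : Type*) [CommRing A]

/-- `⟨N(J)⟩`: the `A`-span of the monomials not in `J`. -/
def nSpan (J : Set (Mon n)) : Submodule A (MvPolynomial (Fin (n + 1)) A) :=
  Submodule.span A {p | ∃ β : Mon n, β ∉ J ∧ p = monomial β (1 : A)}

/-- `⟨N(J)_s⟩`: the `A`-span of the monomials of degree `s` not in `J`. -/
def nSpanDeg (J : Set (Mon n)) (s : ℕ) : Submodule A (MvPolynomial (Fin (n + 1)) A) :=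
  Submodule.span A {p | ∃ β : Mon n, β ∉ J ∧ mdeg β = s ∧ p = monomial β (1 : A)}

/-- `I_s`: the degree-`s` homogeneous component of an ideal, as an `A`-submodule. -/
def idealDeg (I : Ideal (MvPolynomial (Fin (n + 1)) A)) (s : ℕ) :
    Submodule A (MvPolynomial (Fin (n + 1)) A) :=
  Submodule.restrictScalars A I ⊓ homogeneousSubmodule (Fin (n + 1)) A s

/-- `I_{≥ s}`: the ideal `⊕_{t ≥ s} I_t`, i.e. the ideal generated by the homogeneous
elements of `I` of degree at least `s`. -/
def idealGeq (I : Ideal (MvPolynomial (Fin (n + 1)) A)) (s : ℕ) :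
    Ideal (MvPolynomial (Fin (n + 1)) A) :=
  Ideal.span {f | f ∈ I ∧ ∃ t : ℕ, s ≤ t ∧ f.IsHomogeneous t}

/-- A homogeneous ideal of the polynomial ring. -/
def IsHomogIdeal (I : Ideal (MvPolynomial (Fin (n + 1)) A)) : Prop :=
  ∀ f ∈ I, ∀ s : ℕ, homogeneousComponent s f ∈ I

variable {A}

/-- A `J`-marked set: a family assigning to each minimal generator `x^α ∈ B_J` a
polynomial `f_α = x^α − Σ_{x^β ∈ N(J)_{|α|}} c_{αβ} x^β`. -/
def IsMarkedSet (J : Set (Mon n)) (F : Mon n → MvPolynomial (Fin (n + 1)) A) : Prop :=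
  ∀ α ∈ minGens J, (F α).coeff α = 1 ∧
    ∀ β ∈ (F α).support, β ≠ α → β ∉ J ∧ mdeg β = mdeg α

/-- The ideal generated by a marked set. -/
def markedIdeal (J : Set (Mon n)) (F : Mon n → MvPolynomial (Fin (n + 1)) A) :
    Ideal (MvPolynomial (Fin (n + 1)) A) :=
  Ideal.span (F '' minGens J)

/-- A `J`-marked basis: a `J`-marked set `F` with `A[x] = (F) ⊕ ⟨N(J)⟩` as `A`-modules. -/
def IsMarkedBasis (J : Set (Mon n)) (F : Mon n → MvPolynomial (Fin (n + 1)) A) : Prop :=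
  IsMarkedSet J F ∧
    IsCompl (Submodule.restrictScalars A (markedIdeal J F)) (nSpan A J)

/-- `F_J^{(s)} = { x^δ f_α : deg(x^δ f_α) = s, min x^α ≥ max x^δ }`. -/
def FSet (J : Set (Mon n)) (F : Mon n → MvPolynomial (Fin (n + 1)) A) (s : ℕ) :
    Set (MvPolynomial (Fin (n + 1)) A) :=
  {p | ∃ α δ : Mon n, α ∈ minGens J ∧ mdeg α + mdeg δ = s ∧ minGeMax α δ ∧
        p = monomial δ (1 : A) * F α}

/-- `F̂_J^{(s)} = { x^δ f_α : deg(x^δ f_α) = s, min x^α < max x^δ }`. -/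
def FHatSet (J : Set (Mon n)) (F : Mon n → MvPolynomial (Fin (n + 1)) A) (s : ℕ) :
    Set (MvPolynomial (Fin (n + 1)) A) :=
  {p | ∃ α δ : Mon n, α ∈ minGens J ∧ mdeg α + mdeg δ = s ∧ ¬ minGeMax α δ ∧
        p = monomial δ (1 : A) * F α}

/-- `SF_J^{(s)} = { x^δ f_β − x^γ f_α : x^δ f_β ∈ F̂_J^{(s)}, x^γ f_α ∈ F_J^{(s)},
x^δ x^β = x^γ x^α }`. -/
def SFSet (J : Set (Mon n)) (F : Mon n → MvPolynomial (Fin (n + 1)) A) (s : ℕ) :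
    Set (MvPolynomial (Fin (n + 1)) A) :=
  {p | ∃ α γ β δ : Mon n, α ∈ minGens J ∧ β ∈ minGens J ∧
      mdeg β + mdeg δ = s ∧ ¬ minGeMax β δ ∧
      mdeg α + mdeg γ = s ∧ minGeMax α γ ∧
      δ + β = γ + α ∧ p = monomial δ (1 : A) * F β - monomial γ (1 : A) * F α}

/-- A `(J_s)`-marked set: one marked polynomial `f̃_γ = x^γ − Σ_{x^δ ∈ N(J)_s} d_{γδ} x^δ`
for each monomial `x^γ` of degree `s` in `J`. -/
def IsTruncMarkedSet (J : Set (Mon n)) (s : ℕ)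
    (f : Mon n → MvPolynomial (Fin (n + 1)) A) : Prop :=
  ∀ γ : Mon n, γ ∈ J → mdeg γ = s →
    (f γ).coeff γ = 1 ∧ ∀ β ∈ (f γ).support, β ≠ γ → β ∉ J ∧ mdeg β = s

end Ring

/-- Index set for the generic coefficients `C_{αβ}` (`x^α ∈ B_J`, `x^β ∈ N(J)_{|α|}`). -/
abbrev CIdx (J : Set (Mon n)) : Type :=
  {p : Mon n × Mon n // p.1 ∈ minGens J ∧ p.2 ∉ J ∧ mdeg p.2 = mdeg p.1}

/-- The coefficient ring `ℤ[C]`. -/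
abbrev ZC (J : Set (Mon n)) : Type := MvPolynomial (CIdx J) ℤ

/-- The generic `J`-marked set `𝓕_J = { x^α − Σ_{x^β ∈ N(J)_{|α|}} C_{αβ} x^β }`
in `ℤ[C][x]`, characterized through its coefficients. -/
def IsGenericMarkedSet (J : Set (Mon n))
    (𝓕 : Mon n → MvPolynomial (Fin (n + 1)) (ZC J)) : Prop :=
  ∀ α : Mon n, ∀ hα : α ∈ minGens J,
    (𝓕 α).coeff α = 1 ∧
    (∀ γ : Mon n, ∀ hγ : γ ∉ J ∧ mdeg γ = mdeg α,
      (𝓕 α).coeff γ = - MvPolynomial.X ⟨(α, γ), hα, hγ.1, hγ.2⟩) ∧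
    (∀ γ : Mon n, γ ≠ α → ¬(γ ∉ J ∧ mdeg γ = mdeg α) → (𝓕 α).coeff γ = 0)

/-- The ideal `𝔦_J ⊆ ℤ[C]` generated by the `x`-coefficients of all polynomials
in `(𝓕_J) ∩ ⟨N(J)⟩`. -/
def markedCoeffIdeal (J : Set (Mon n))
    (𝓕 : Mon n → MvPolynomial (Fin (n + 1)) (ZC J)) : Ideal (ZC J) :=
  Ideal.span {c : ZC J | ∃ p : MvPolynomial (Fin (n + 1)) (ZC J),
    p ∈ markedIdeal J 𝓕 ∧ p ∈ nSpan (ZC J) J ∧ ∃ γ : Mon n, p.coeff γ = c}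

/-- The evaluation homomorphism `φ_{F_J} : ℤ[C] → A`, `C_{αβ} ↦ c_{αβ}`, associated to a
`J`-marked set `F` with `f_α = x^α − Σ c_{αβ} x^β` (so `c_{αβ} = −(F α).coeff β`). -/
noncomputable def evalHom (J : Set (Mon n)) {A : Type*} [CommRing A]
    (F : Mon n → MvPolynomial (Fin (n + 1)) A) : ZC J →+* A :=
  MvPolynomial.eval₂Hom (Int.castRingHom A) fun p => -((F p.val.1).coeff p.val.2)

/-- `x^γ` is the `σ`-leading monomial of `g` (with nonzero leading coefficient). -/
def IsLeadingMon {A : Type*} [CommRing A] (σlt : Mon n → Mon n → Prop)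
    (g : MvPolynomial (Fin (n + 1)) A) (γ : Mon n) : Prop :=
  g.coeff γ ≠ 0 ∧ ∀ δ ∈ g.support, δ ≠ γ → σlt δ γ

/-- `LC(I, x^γ)`: the set of leading coefficients at `x^γ` of elements of `I`,
together with `0`. -/
def LCset {A : Type*} [CommRing A] (σlt : Mon n → Mon n → Prop)
    (I : Ideal (MvPolynomial (Fin (n + 1)) A)) (γ : Mon n) : Set A :=
  {a | ∃ g ∈ I, IsLeadingMon σlt g γ ∧ g.coeff γ = a} ∪ {0}

/-- A monic ideal with respect to the term ordering `σ`. -/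
def IsMonicIdeal {A : Type*} [CommRing A] (σlt : Mon n → Mon n → Prop)
    (I : Ideal (MvPolynomial (Fin (n + 1)) A)) : Prop :=
  ∀ γ : Mon n, LCset σlt I γ = {0} ∨ LCset σlt I γ = Set.univ

/-- The set of `σ`-leading monomials of elements of `I` (i.e. `in_σ(I)`,
identified with its set of monomials). -/
def leadingMons {A : Type*} [CommRing A] (σlt : Mon n → Mon n → Prop)
    (I : Ideal (MvPolynomial (Fin (n + 1)) A)) : Set (Mon n) :=
  {γ | ∃ g ∈ I, IsLeadingMon σlt g γ}

end MarkedFamilies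
end
noncomputable section AuxSheaf
open MvPolynomial MarkedFamilies

variable {n : ℕ} {A : Type*} [CommRing A]

lemma mem_nSpan_iff {J : Set (Mon n)} {p : MvPolynomial (Fin (n + 1)) A} :
    p ∈ nSpan A J ↔ ∀ γ ∈ J, p.coeff γ = 0 := by
  constructor
  · intro hp γ hγ
    induction hp using Submodule.span_induction with
    | mem x hx => obtain ⟨β, hβ, rfl⟩ := hx
                  rw [coeff_monomial]
                  split
                  · next h => exact absurd (h ▸ hγ) hβ
                  · rfl
    | zero => simp
    | add x y hx hy ihx ihy => simp [ihx, ihy]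
    | smul a x hx ih => simp [ih]
  · intro h
    rw [← support_sum_monomial_coeff p]
    refine Submodule.sum_mem _ fun v hv => ?_
    have hvJ : v ∉ J := fun hvJ => (MvPolynomial.mem_support_iff.mp hv) (h v hvJ)
    have : (monomial v) (coeff v p) = (coeff v p) • (monomial v (1 : A)) := by
      rw [smul_monomial, smul_eq_mul, mul_one]
    rw [this]
    exact Submodule.smul_mem _ _ (Submodule.subset_span ⟨v, hvJ, rfl⟩)

lemma away_kill (r : A) {c : A}
    (h : algebraMap A (Localization.Away r) c = 0) : ∃ t : ℕ, r ^ t * c = 0 := by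
  obtain ⟨⟨m, hm⟩, hmc⟩ := (IsLocalization.map_eq_zero_iff (Submonoid.powers r)
    (Localization.Away r) c).mp h
  obtain ⟨t, rfl⟩ := hm
  exact ⟨t, hmc⟩

lemma away_clear (r : A) (z : Localization.Away r) :
    ∃ (t : ℕ) (b : A), z * algebraMap A (Localization.Away r) (r ^ t)
      = algebraMap A (Localization.Away r) b := by
  obtain ⟨⟨b, m, hm⟩, h⟩ := IsLocalization.surj (Submonoid.powers r) z
  obtain ⟨t, rfl⟩ := hm
  exact ⟨t, b, h⟩

lemma away_unit (r : A) : IsUnit (algebraMap A (Localization.Away r) r) :=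
  IsLocalization.map_units (Localization.Away r) ⟨r, Submonoid.mem_powers r⟩

lemma span_pow_top {k : ℕ} (a : Fin k → A) (ha : Ideal.span (Set.range a) = ⊤)
    (m : Fin k → ℕ) : Ideal.span (Set.range fun i => a i ^ m i) = ⊤ := by
  rw [← Ideal.radical_eq_top]
  rw [eq_top_iff, ← ha, Ideal.span_le]
  rintro x ⟨i, rfl⟩
  exact Ideal.mem_radical_iff.mpr ⟨m i, Ideal.subset_span ⟨i, rfl⟩⟩

lemma one_eq_sum_pow {k : ℕ} (a : Fin k → A) (ha : Ideal.span (Set.range a) = ⊤)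
    (m : Fin k → ℕ) : ∃ e : Fin k → A, ∑ i, e i * a i ^ m i = 1 := by
  have : (1 : A) ∈ Ideal.span (Set.range fun i => a i ^ m i) := by
    rw [span_pow_top a ha m]; trivial
  obtain ⟨e, he⟩ := Submodule.mem_span_range_iff_exists_fun A |>.mp this
  exact ⟨e, by simpa [smul_eq_mul] using he⟩

lemma eq_zero_of_localizations {k : ℕ} (a : Fin k → A) (ha : Ideal.span (Set.range a) = ⊤)
    {c : A} (h : ∀ i, algebraMap A (Localization.Away (a i)) c = 0) : c = 0 := by
  have ht : ∀ i, ∃ t : ℕ, a i ^ t * c = 0 := fun i => away_kill (a i) (h i)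
  choose t hti using ht
  obtain ⟨e, he⟩ := one_eq_sum_pow a ha t
  calc c = (∑ i, e i * a i ^ t i) * c := by rw [he, one_mul]
  _ = ∑ i, e i * (a i ^ t i * c) := by rw [Finset.sum_mul]; exact Finset.sum_congr rfl fun i _ => by ring
  _ = 0 := by simp [hti]

lemma poly_eq_zero_of_localizations {k : ℕ} (a : Fin k → A)
    (ha : Ideal.span (Set.range a) = ⊤) {p : MvPolynomial (Fin (n + 1)) A}
    (h : ∀ i, MvPolynomial.map (algebraMap A (Localization.Away (a i))) p = 0) : p = 0 := by
  ext γ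
  rw [coeff_zero]
  exact eq_zero_of_localizations a ha fun i => by
    simpa [coeff_map] using congrArg (coeff γ) (h i)

end AuxSheaf
noncomputable section AuxSheaf2
open MvPolynomial MarkedFamilies

variable {n : ℕ} {A : Type*} [CommRing A]

/-- Clear denominators of a polynomial over a localization away from `r`. -/
lemma poly_clear (r : A) (u : MvPolynomial (Fin (n + 1)) (Localization.Away r)) :
    ∃ (t : ℕ) (p : MvPolynomial (Fin (n + 1)) A),
      MvPolynomial.map (algebraMap A (Localization.Away r)) p
        = C (algebraMap A (Localization.Away r) (r ^ t)) * u := by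
  classical
  have hch : ∀ γ : Mon n, ∃ (t : ℕ) (b : A),
      u.coeff γ * algebraMap A (Localization.Away r) (r ^ t)
        = algebraMap A (Localization.Away r) b := fun γ => away_clear r (u.coeff γ)
  choose t b hb using hch
  set T : ℕ := u.support.sup t with hT
  refine ⟨T, ∑ γ ∈ u.support, monomial γ (b γ * r ^ (T - t γ)), ?_⟩
  ext γ
  rw [coeff_map, coeff_C_mul, coeff_sum]
  simp only [coeff_monomial]
  rw [Finset.sum_ite_eq' u.support γ (fun γ => b γ * r ^ (T - t γ))]
  by_cases hγ : γ ∈ u.support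
  · rw [if_pos hγ]
    have htT : t γ ≤ T := Finset.le_sup hγ
    rw [map_mul, ← hb γ, map_pow, map_pow]
    have : (T - t γ) + t γ = T := Nat.sub_add_cancel htT
    calc u.coeff γ * algebraMap A (Localization.Away r) r ^ t γ
          * algebraMap A (Localization.Away r) r ^ (T - t γ)
        = u.coeff γ * algebraMap A (Localization.Away r) r ^ T := by
          rw [mul_assoc, ← pow_add, add_comm (t γ) (T - t γ), this]
    _ = algebraMap A (Localization.Away r) (r ^ T) * u.coeff γ := by
          rw [map_pow]; ring
  · rw [if_neg hγ]
    rw [MvPolynomial.notMem_support_iff.mp hγ]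
    simp

/-- Kernel control for a map out of `Localization.Away r` into a ring where the kernel of
`algebraMap A S` is killed by powers of `r * s`. -/
lemma g_kill (r s : A) {S : Type*} [CommRing S]
    (g : Localization.Away r →+* S) (algS : A →+* S)
    (hg : ∀ c : A, g (algebraMap A (Localization.Away r) c) = algS c)
    (hker : ∀ b : A, algS b = 0 → ∃ t : ℕ, s ^ t * (r ^ t * b) = 0)
    {z : Localization.Away r} (hz : g z = 0) :
    ∃ t : ℕ, algebraMap A (Localization.Away r) (s ^ t) * z = 0 := by
  obtain ⟨p, b, hb⟩ := away_clear r z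
  have h0 : algS b = 0 := by
    rw [← hg, ← hb, map_mul, hz, zero_mul]
  obtain ⟨t, ht⟩ := hker b h0
  refine ⟨t, ?_⟩
  have hu : IsUnit (algebraMap A (Localization.Away r) (r ^ (t + p))) := by
    rw [map_pow]; exact (away_unit r).pow _
  rw [← hu.mul_right_eq_zero]
  calc algebraMap A (Localization.Away r) (r ^ (t + p))
        * (algebraMap A (Localization.Away r) (s ^ t) * z)
      = algebraMap A (Localization.Away r) (r ^ t * s ^ t)
        * (z * algebraMap A (Localization.Away r) (r ^ p)) := by
        simp only [map_mul, map_pow, pow_add]; ring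
  _ = algebraMap A (Localization.Away r) (s ^ t * (r ^ t * b)) := by
        rw [hb, ← map_mul]; ring_nf
  _ = 0 := by rw [ht, map_zero]

/-- Polynomial version of `g_kill`. -/
lemma gpoly_kill (r s : A) {S : Type*} [CommRing S]
    (g : Localization.Away r →+* S) (algS : A →+* S)
    (hg : ∀ c : A, g (algebraMap A (Localization.Away r) c) = algS c)
    (hker : ∀ b : A, algS b = 0 → ∃ t : ℕ, s ^ t * (r ^ t * b) = 0)
    {w : MvPolynomial (Fin (n + 1)) (Localization.Away r)} {Jset : Set (Mon n)}
    (hw : ∀ γ ∈ Jset, (MvPolynomial.map g w).coeff γ = 0) :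
    ∃ t : ℕ, ∀ γ ∈ Jset,
      algebraMap A (Localization.Away r) (s ^ t) * w.coeff γ = 0 := by
  classical
  have hch : ∀ γ : Mon n, ∃ t : ℕ,
      γ ∈ Jset → γ ∈ w.support → algebraMap A (Localization.Away r) (s ^ t) * w.coeff γ = 0 := by
    intro γ
    by_cases h1 : γ ∈ Jset
    · by_cases h2 : γ ∈ w.support
      · have : g (w.coeff γ) = 0 := by rw [← coeff_map]; exact hw γ h1
        obtain ⟨t, ht⟩ := g_kill r s g algS hg hker this
        exact ⟨t, fun _ _ => ht⟩
      · exact ⟨0, fun _ h => absurd h h2⟩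
    · exact ⟨0, fun h => absurd h h1⟩
  choose t ht using hch
  refine ⟨w.support.sup t, fun γ hγ => ?_⟩
  by_cases h2 : γ ∈ w.support
  · have htT : t γ ≤ w.support.sup t := Finset.le_sup h2
    have := ht γ hγ h2
    calc algebraMap A (Localization.Away r) (s ^ w.support.sup t) * w.coeff γ
        = algebraMap A (Localization.Away r) (s ^ (w.support.sup t - t γ))
          * (algebraMap A (Localization.Away r) (s ^ t γ) * w.coeff γ) := by
          rw [← mul_assoc, ← map_mul, ← pow_add, Nat.sub_add_cancel htT]
    _ = 0 := by rw [this, mul_zero]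
  · rw [MvPolynomial.notMem_support_iff.mp h2, mul_zero]

end AuxSheaf2
noncomputable section AuxSheaf3
open MvPolynomial MarkedFamilies

variable {n : ℕ} {A : Type*} [CommRing A]

/-- Pull back membership in a mapped ideal, at the cost of a power of `ρ`. -/
lemma map_mem_pull (ρ : A) {Rl S : Type*} [CommRing Rl] [CommRing S]
    (g : Rl →+* S) (algS : A →+* S) (algR : A →+* Rl)
    (hg : ∀ c : A, g (algR c) = algS c)
    (hclear : ∀ u : MvPolynomial (Fin (n + 1)) S, ∃ (t : ℕ) (p : MvPolynomial (Fin (n + 1)) A),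
      MvPolynomial.map algS p = C (algS (ρ ^ t)) * u)
    (Il : Ideal (MvPolynomial (Fin (n + 1)) Rl))
    {z : MvPolynomial (Fin (n + 1)) S}
    (hz : z ∈ Ideal.map (MvPolynomial.map g) Il) :
    ∃ (t : ℕ) (w : MvPolynomial (Fin (n + 1)) Rl),
      w ∈ Il ∧ MvPolynomial.map g w = C (algS (ρ ^ t)) * z := by
  have hgC : ∀ c : A, MvPolynomial.map g (C (algR c) : MvPolynomial (Fin (n + 1)) Rl)
      = C (algS c) := by
    intro c; rw [map_C, hg]
  rw [Ideal.map, Ideal.span] at hz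
  induction hz using Submodule.span_induction with
  | mem x hx =>
    obtain ⟨u, hu, rfl⟩ := hx
    exact ⟨0, u, hu, by rw [pow_zero, map_one, C_1, one_mul]⟩
  | zero => exact ⟨0, 0, Ideal.zero_mem _, by simp⟩
  | add x y hx hy ihx ihy =>
    obtain ⟨tx, wx, hwx, hmx⟩ := ihx
    obtain ⟨ty, wy, hwy, hmy⟩ := ihy
    refine ⟨tx + ty, C (algR (ρ ^ ty)) * wx + C (algR (ρ ^ tx)) * wy,
      Ideal.add_mem _ (Ideal.mul_mem_left _ _ hwx) (Ideal.mul_mem_left _ _ hwy), ?_⟩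
    rw [map_add, map_mul, map_mul, hgC, hgC, hmx, hmy]
    rw [pow_add, map_mul (algS), C_mul]
    ring
  | smul q x hx ih =>
    obtain ⟨tx, wx, hwx, hmx⟩ := ih
    obtain ⟨tq, pq, hpq⟩ := hclear q
    refine ⟨tq + tx, MvPolynomial.map algR pq * wx, Ideal.mul_mem_left _ _ hwx, ?_⟩
    have : MvPolynomial.map g (MvPolynomial.map algR pq) = MvPolynomial.map algS pq := by
      have h2 : g.comp algR = algS := RingHom.ext hg
      rw [MvPolynomial.map_map, h2]
    rw [map_mul, this, hpq, hmx, smul_eq_mul, pow_add, map_mul (algS), C_mul]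
    ring

/-- Glue compatible elements of the localizations into a global element. -/
lemma glue_coeff {k : ℕ} (a : Fin k → A) (ha : Ideal.span (Set.range a) = ⊤)
    (g₁ : ∀ i j : Fin k, Localization.Away (a i) →+* Localization.Away (a i * a j))
    (g₂ : ∀ i j : Fin k, Localization.Away (a j) →+* Localization.Away (a i * a j))
    (hg₁ : ∀ i j c, g₁ i j (algebraMap A (Localization.Away (a i)) c)
        = algebraMap A (Localization.Away (a i * a j)) c)
    (hg₂ : ∀ i j c, g₂ i j (algebraMap A (Localization.Away (a j)) c)
        = algebraMap A (Localization.Away (a i * a j)) c)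
    (c : ∀ i, Localization.Away (a i))
    (hcompat : ∀ i j, g₁ i j (c i) = g₂ i j (c j)) :
    ∃ b : A, ∀ i, algebraMap A (Localization.Away (a i)) b = c i := by
  classical
  choose m b0 hb0 using fun i => away_clear (a i) (c i)
  set M : ℕ := Finset.univ.sup m with hM
  set b' : Fin k → A := fun i => b0 i * a i ^ (M - m i) with hb'
  have hbM : ∀ i, c i * algebraMap A (Localization.Away (a i)) (a i ^ M)
      = algebraMap A (Localization.Away (a i)) (b' i) := by
    intro i
    have hmi : m i ≤ M := Finset.le_sup (Finset.mem_univ i)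
    rw [hb', map_mul, ← hb0 i, map_pow, map_pow, map_pow, mul_assoc, ← pow_add,
      add_comm (m i) (M - m i), Nat.sub_add_cancel hmi]
  -- pairwise difference killed by a power of a i * a j
  have hd : ∀ i j : Fin k, ∃ t : ℕ,
      (a i * a j) ^ t * (b' i * a j ^ M - b' j * a i ^ M) = 0 := by
    intro i j
    apply away_kill (a i * a j)
    have e1 : algebraMap A (Localization.Away (a i * a j)) (b' i * a j ^ M)
        = g₁ i j (c i) * algebraMap A (Localization.Away (a i * a j)) (a i ^ M * a j ^ M) := by
      rw [map_mul, ← hg₁ i j (b' i), ← hbM i, map_mul, hg₁ i j, map_mul]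
      ring
    have e2 : algebraMap A (Localization.Away (a i * a j)) (b' j * a i ^ M)
        = g₂ i j (c j) * algebraMap A (Localization.Away (a i * a j)) (a i ^ M * a j ^ M) := by
      rw [map_mul, ← hg₂ i j (b' j), ← hbM j, map_mul, hg₂ i j, map_mul]
      ring
    rw [map_sub, e1, e2, hcompat i j, sub_self]
  choose t ht using hd
  set T : ℕ := Finset.univ.sup fun i => Finset.univ.sup (t i) with hTdef
  have htT : ∀ i j, t i j ≤ T :=
    fun i j => le_trans (Finset.le_sup (Finset.mem_univ j))
      (Finset.le_sup (f := fun i => Finset.univ.sup (t i)) (Finset.mem_univ i))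
  have hdT : ∀ i j, (a i * a j) ^ T * (b' i * a j ^ M - b' j * a i ^ M) = 0 := by
    intro i j
    calc (a i * a j) ^ T * (b' i * a j ^ M - b' j * a i ^ M)
        = (a i * a j) ^ (T - t i j)
          * ((a i * a j) ^ (t i j) * (b' i * a j ^ M - b' j * a i ^ M)) := by
          rw [← mul_assoc, ← pow_add, Nat.sub_add_cancel (htT i j)]
    _ = 0 := by rw [ht i j, mul_zero]
  set B : Fin k → A := fun i => b' i * a i ^ T with hB
  set N : ℕ := M + T with hN
  have hBN : ∀ i j, B i * a j ^ N = B j * a i ^ N := by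
    intro i j
    have h := hdT i j
    simp only [hB, hN]
    linear_combination h
  obtain ⟨e, he⟩ := one_eq_sum_pow a ha fun _ => N
  refine ⟨∑ i, e i * B i, fun j => ?_⟩
  have hcBj : c j * algebraMap A (Localization.Away (a j)) (a j ^ N)
      = algebraMap A (Localization.Away (a j)) (B j) := by
    rw [hB, hN, pow_add, map_mul, map_mul, ← mul_assoc, hbM j]
  have hbb : (∑ i, e i * B i) * a j ^ N = B j := by
    calc (∑ i, e i * B i) * a j ^ N = ∑ i, e i * (B i * a j ^ N) := by
          rw [Finset.sum_mul]; exact Finset.sum_congr rfl fun i _ => by ring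
    _ = ∑ i, e i * a i ^ N * B j := by
          exact Finset.sum_congr rfl fun i _ => by rw [hBN i j]; ring
    _ = (∑ i, e i * a i ^ N) * B j := by rw [Finset.sum_mul]
    _ = B j := by rw [he, one_mul]
  have hu : IsUnit (algebraMap A (Localization.Away (a j)) (a j ^ N)) := by
    rw [map_pow]; exact (away_unit (a j)).pow _
  apply hu.mul_right_cancel
  rw [← map_mul, hbb, ← hcBj]

end AuxSheaf3
noncomputable section AuxSheaf4
open MvPolynomial MarkedFamilies

variable {n : ℕ} {A : Type*} [CommRing A]

lemma nSpan_map {B : Type*} [CommRing B] (g : A →+* B) {J : Set (Mon n)}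
    {p : MvPolynomial (Fin (n + 1)) A} (hp : p ∈ nSpan A J) :
    MvPolynomial.map g p ∈ nSpan B J := by
  rw [mem_nSpan_iff] at hp ⊢
  intro γ hγ
  rw [coeff_map, hp γ hγ, map_zero]

lemma glue_poly {k : ℕ} (a : Fin k → A) (ha : Ideal.span (Set.range a) = ⊤)
    (g₁ : ∀ i j : Fin k, Localization.Away (a i) →+* Localization.Away (a i * a j))
    (g₂ : ∀ i j : Fin k, Localization.Away (a j) →+* Localization.Away (a i * a j))
    (hg₁ : ∀ i j c, g₁ i j (algebraMap A (Localization.Away (a i)) c)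
        = algebraMap A (Localization.Away (a i * a j)) c)
    (hg₂ : ∀ i j c, g₂ i j (algebraMap A (Localization.Away (a j)) c)
        = algebraMap A (Localization.Away (a i * a j)) c)
    (v : ∀ i, MvPolynomial (Fin (n + 1)) (Localization.Away (a i)))
    (hcompat : ∀ i j, MvPolynomial.map (g₁ i j) (v i) = MvPolynomial.map (g₂ i j) (v j)) :
    ∃ p : MvPolynomial (Fin (n + 1)) A,
      ∀ i, MvPolynomial.map (algebraMap A (Localization.Away (a i))) p = v i := by
  classical
  have hcc : ∀ γ : Mon n, ∃ b : A, ∀ i,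
      algebraMap A (Localization.Away (a i)) b = (v i).coeff γ := by
    intro γ
    refine glue_coeff a ha g₁ g₂ hg₁ hg₂ (fun i => (v i).coeff γ) ?_
    intro i j
    have h1 := congrArg (coeff γ) (hcompat i j)
    rwa [coeff_map, coeff_map] at h1
  choose c hc using hcc
  set S : Finset (Mon n) := Finset.univ.biUnion (fun i => (v i).support) with hS
  refine ⟨∑ γ ∈ S, monomial γ (c γ), fun i => ?_⟩
  ext γ
  rw [coeff_map, coeff_sum]
  simp only [coeff_monomial]
  rw [Finset.sum_ite_eq' S γ c]
  by_cases hγ : γ ∈ S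
  · rw [if_pos hγ]; exact hc γ i
  · rw [if_neg hγ, map_zero]
    have : γ ∉ (v i).support := fun h => hγ (Finset.mem_biUnion.mpr ⟨i, Finset.mem_univ i, h⟩)
    exact (MvPolynomial.notMem_support_iff.mp this).symm

end AuxSheaf4
open MarkedFamilies in
set_option maxHeartbeats 1000000 in
/-- the marked family is a Zariski sheaf: compatible local elements of
the marked family over a localization cover glue uniquely. -/
theorem stmt_12 {n : ℕ} {A : Type*} [CommRing A] [IsNoetherianRing A]
    (J : Set (Mon n)) (hJ : IsStronglyStable J)
    (k : ℕ) (a : Fin k → A) (ha : Ideal.span (Set.range a) = ⊤)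
    (I : ∀ i : Fin k, Ideal (MvPolynomial (Fin (n + 1)) (Localization.Away (a i))))
    (hI : ∀ i, IsCompl (Submodule.restrictScalars (Localization.Away (a i)) (I i))
      (nSpan (Localization.Away (a i)) J))
    (g₁ : ∀ i j : Fin k, Localization.Away (a i) →+* Localization.Away (a i * a j))
    (g₂ : ∀ i j : Fin k, Localization.Away (a j) →+* Localization.Away (a i * a j))
    (hg₁ : ∀ i j, (g₁ i j).comp (algebraMap A (Localization.Away (a i)))
        = algebraMap A (Localization.Away (a i * a j)))
    (hg₂ : ∀ i j, (g₂ i j).comp (algebraMap A (Localization.Away (a j)))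
        = algebraMap A (Localization.Away (a i * a j)))
    (hcomp : ∀ i j, Ideal.map (MvPolynomial.map (g₁ i j)) (I i)
        = Ideal.map (MvPolynomial.map (g₂ i j)) (I j)) :
    ∃! I₀ : Ideal (MvPolynomial (Fin (n + 1)) A),
      IsCompl (Submodule.restrictScalars A I₀) (nSpan A J) ∧
      ∀ i, Ideal.map (MvPolynomial.map (algebraMap A (Localization.Away (a i)))) I₀
        = I i := by
  classical
  have hg₁' : ∀ i j c, g₁ i j (algebraMap A (Localization.Away (a i)) c)
      = algebraMap A (Localization.Away (a i * a j)) c :=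
    fun i j c => RingHom.congr_fun (hg₁ i j) c
  have hg₂' : ∀ i j c, g₂ i j (algebraMap A (Localization.Away (a j)) c)
      = algebraMap A (Localization.Away (a i * a j)) c :=
    fun i j c => RingHom.congr_fun (hg₂ i j) c
  have hψφ₁ : ∀ (i j : Fin k) (p : MvPolynomial (Fin (n + 1)) A),
      MvPolynomial.map (g₁ i j) (MvPolynomial.map (algebraMap A (Localization.Away (a i))) p)
        = MvPolynomial.map (algebraMap A (Localization.Away (a i * a j))) p := by
    intro i j p; rw [MvPolynomial.map_map, hg₁ i j]
  have hψφ₂ : ∀ (i j : Fin k) (p : MvPolynomial (Fin (n + 1)) A),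
      MvPolynomial.map (g₂ i j) (MvPolynomial.map (algebraMap A (Localization.Away (a j))) p)
        = MvPolynomial.map (algebraMap A (Localization.Away (a i * a j))) p := by
    intro i j p; rw [MvPolynomial.map_map, hg₂ i j]
  have hker : ∀ (i j : Fin k) (b : A),
      algebraMap A (Localization.Away (a i * a j)) b = 0 →
      ∃ t : ℕ, a j ^ t * (a i ^ t * b) = 0 := by
    intro i j b hb
    obtain ⟨t, ht⟩ := away_kill (a i * a j) hb
    exact ⟨t, by linear_combination ht⟩
  -- the intersection of the localized ideal with the span of N(J) is zero
  have hzero : ∀ (i j : Fin k) (z : MvPolynomial (Fin (n + 1)) (Localization.Away (a i * a j))),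
      z ∈ Ideal.map (MvPolynomial.map (g₁ i j)) (I i) →
      z ∈ nSpan (Localization.Away (a i * a j)) J → z = 0 := by
    intro i j z hz1 hz2
    obtain ⟨t, w, hw, hmap⟩ := map_mem_pull (a i * a j) (g₁ i j)
      (algebraMap A (Localization.Away (a i * a j))) (algebraMap A (Localization.Away (a i)))
      (hg₁' i j) (poly_clear (a i * a j)) (I i) hz1
    have hwJ : ∀ γ ∈ J, (MvPolynomial.map (g₁ i j) w).coeff γ = 0 := by
      intro γ hγ
      rw [hmap, MvPolynomial.coeff_C_mul, mem_nSpan_iff.mp hz2 γ hγ, mul_zero]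
    obtain ⟨T, hT⟩ := gpoly_kill (a i) (a j) (g₁ i j)
      (algebraMap A (Localization.Away (a i * a j))) (hg₁' i j) (hker i j) hwJ
    have hw' : MvPolynomial.C (algebraMap A (Localization.Away (a i)) (a j ^ T)) * w = 0 := by
      have hmem1 : MvPolynomial.C (algebraMap A (Localization.Away (a i)) (a j ^ T)) * w ∈ I i :=
        Ideal.mul_mem_left _ _ hw
      have hmem2 : MvPolynomial.C (algebraMap A (Localization.Away (a i)) (a j ^ T)) * w
          ∈ nSpan (Localization.Away (a i)) J := by
        rw [mem_nSpan_iff]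
        intro γ hγ
        rw [MvPolynomial.coeff_C_mul]
        exact hT γ hγ
      exact Submodule.disjoint_def.mp (hI i).disjoint _ hmem1 hmem2
    have h0 : MvPolynomial.C (algebraMap A (Localization.Away (a i * a j)) (a j ^ T)
        * algebraMap A (Localization.Away (a i * a j)) ((a i * a j) ^ t)) * z = 0 := by
      have h1 := congrArg (MvPolynomial.map (g₁ i j)) hw'
      rw [map_mul, MvPolynomial.map_C, hg₁' i j, hmap, map_zero] at h1
      rw [MvPolynomial.C_mul, mul_assoc]
      exact h1
    have hu1 : IsUnit (algebraMap A (Localization.Away (a i * a j)) (a j ^ T)) := by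
      rw [map_pow]
      refine IsUnit.pow _ ?_
      have := away_unit (a i * a j)
      rw [map_mul] at this
      exact isUnit_of_mul_isUnit_right this
    have hu2 : IsUnit (algebraMap A (Localization.Away (a i * a j)) ((a i * a j) ^ t)) := by
      rw [map_pow]; exact (away_unit (a i * a j)).pow t
    have hu : IsUnit (MvPolynomial.C (algebraMap A (Localization.Away (a i * a j)) (a j ^ T)
        * algebraMap A (Localization.Away (a i * a j)) ((a i * a j) ^ t)) :
        MvPolynomial (Fin (n + 1)) (Localization.Away (a i * a j))) :=
      IsUnit.map MvPolynomial.C (hu1.mul hu2)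
    exact (hu.mul_right_eq_zero).mp h0
  -- the glued ideal
  set I₀ : Ideal (MvPolynomial (Fin (n + 1)) A) :=
    ⨅ i, Ideal.comap (MvPolynomial.map (algebraMap A (Localization.Away (a i)))) (I i)
    with hI₀def
  have hmemI₀ : ∀ p : MvPolynomial (Fin (n + 1)) A, p ∈ I₀ ↔
      ∀ i, MvPolynomial.map (algebraMap A (Localization.Away (a i))) p ∈ I i := by
    intro p
    rw [hI₀def]
    simp [Ideal.mem_iInf, Ideal.mem_comap]
  have hle : ∀ i, Ideal.map (MvPolynomial.map (algebraMap A (Localization.Away (a i)))) I₀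
      ≤ I i := by
    intro i
    rw [Ideal.map_le_iff_le_comap, hI₀def]
    exact iInf_le _ i
  have hdisj : Disjoint (Submodule.restrictScalars A I₀) (nSpan A J) := by
    rw [Submodule.disjoint_def]
    intro f hf1 hf2
    apply poly_eq_zero_of_localizations a ha
    intro i
    exact Submodule.disjoint_def.mp (hI i).disjoint _ ((hmemI₀ f).mp hf1 i)
      (nSpan_map _ hf2)
  have hdecomp : ∀ (i : Fin k) (f : MvPolynomial (Fin (n + 1)) (Localization.Away (a i))),
      ∃ u ∈ I i, ∃ v ∈ nSpan (Localization.Away (a i)) J, u + v = f := by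
    intro i f
    have : f ∈ (Submodule.restrictScalars (Localization.Away (a i)) (I i))
        ⊔ nSpan (Localization.Away (a i)) J := by
      rw [codisjoint_iff.mp (hI i).codisjoint]; trivial
    exact Submodule.mem_sup.mp this
  have hcodisj : Codisjoint (Submodule.restrictScalars A I₀) (nSpan A J) := by
    rw [codisjoint_iff, eq_top_iff]
    intro f _
    choose u hu v hv huv using fun i =>
      hdecomp i (MvPolynomial.map (algebraMap A (Localization.Away (a i))) f)
    have hvcomp : ∀ i j, MvPolynomial.map (g₁ i j) (v i) = MvPolynomial.map (g₂ i j) (v j) := by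
      intro i j
      have e1 : MvPolynomial.map (g₁ i j) (u i) + MvPolynomial.map (g₁ i j) (v i)
          = MvPolynomial.map (algebraMap A (Localization.Away (a i * a j))) f := by
        rw [← map_add, huv i, hψφ₁]
      have e2 : MvPolynomial.map (g₂ i j) (u j) + MvPolynomial.map (g₂ i j) (v j)
          = MvPolynomial.map (algebraMap A (Localization.Away (a i * a j))) f := by
        rw [← map_add, huv j, hψφ₂]
      have e : MvPolynomial.map (g₁ i j) (v i) - MvPolynomial.map (g₂ i j) (v j)
          = MvPolynomial.map (g₂ i j) (u j) - MvPolynomial.map (g₁ i j) (u i) := by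
        rw [← e2] at e1
        linear_combination e1
      have m1 : MvPolynomial.map (g₁ i j) (u i)
          ∈ Ideal.map (MvPolynomial.map (g₁ i j)) (I i) := Ideal.mem_map_of_mem _ (hu i)
      have m2 : MvPolynomial.map (g₂ i j) (u j)
          ∈ Ideal.map (MvPolynomial.map (g₁ i j)) (I i) := by
        rw [hcomp i j]; exact Ideal.mem_map_of_mem _ (hu j)
      have hz1 : MvPolynomial.map (g₁ i j) (v i) - MvPolynomial.map (g₂ i j) (v j)
          ∈ Ideal.map (MvPolynomial.map (g₁ i j)) (I i) := by
        rw [e]; exact Ideal.sub_mem _ m2 m1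
      have hz2 : MvPolynomial.map (g₁ i j) (v i) - MvPolynomial.map (g₂ i j) (v j)
          ∈ nSpan (Localization.Away (a i * a j)) J :=
        Submodule.sub_mem _ (nSpan_map _ (hv i)) (nSpan_map _ (hv j))
      exact sub_eq_zero.mp (hzero i j _ hz1 hz2)
    obtain ⟨pv, hpv⟩ := glue_poly a ha g₁ g₂ hg₁' hg₂' v hvcomp
    have hpvN : pv ∈ nSpan A J := by
      rw [mem_nSpan_iff]
      intro γ hγ
      apply eq_zero_of_localizations a ha
      intro i
      have h1 := congrArg (MvPolynomial.coeff γ) (hpv i)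
      rw [MvPolynomial.coeff_map] at h1
      rw [h1]
      exact mem_nSpan_iff.mp (hv i) γ hγ
    have hfI : f - pv ∈ I₀ := by
      rw [hmemI₀]
      intro i
      rw [map_sub, hpv i]
      have h2 : MvPolynomial.map (algebraMap A (Localization.Away (a i))) f - v i = u i := by
        rw [← huv i, add_sub_cancel_right]
      rw [h2]
      exact hu i
    rw [Submodule.mem_sup]
    exact ⟨f - pv, hfI, pv, hpvN, sub_add_cancel f pv⟩
  have hmapeq : ∀ i,
      Ideal.map (MvPolynomial.map (algebraMap A (Localization.Away (a i)))) I₀ = I i := by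
    intro i
    refine le_antisymm (hle i) ?_
    intro x hx
    obtain ⟨t, p, hp⟩ := poly_clear (a i) x
    have hptop : p ∈ (Submodule.restrictScalars A I₀) ⊔ nSpan A J := by
      rw [codisjoint_iff.mp hcodisj]; trivial
    obtain ⟨q, hq, w, hwN, hqw⟩ := Submodule.mem_sup.mp hptop
    have hmapw0 : MvPolynomial.map (algebraMap A (Localization.Away (a i))) w = 0 := by
      apply Submodule.disjoint_def.mp (hI i).disjoint
      · have h3 : MvPolynomial.map (algebraMap A (Localization.Away (a i))) w
            = MvPolynomial.C (algebraMap A (Localization.Away (a i)) (a i ^ t)) * x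
              - MvPolynomial.map (algebraMap A (Localization.Away (a i))) q := by
          rw [← hp, ← hqw, map_add, add_sub_cancel_left]
        rw [Submodule.restrictScalars_mem, h3]
        exact Ideal.sub_mem _ (Ideal.mul_mem_left _ _ hx)
          ((hle i) (Ideal.mem_map_of_mem _ hq))
      · exact nSpan_map _ hwN
    have hx' : MvPolynomial.C (algebraMap A (Localization.Away (a i)) (a i ^ t)) * x
        ∈ Ideal.map (MvPolynomial.map (algebraMap A (Localization.Away (a i)))) I₀ := by
      have h4 : MvPolynomial.C (algebraMap A (Localization.Away (a i)) (a i ^ t)) * x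
          = MvPolynomial.map (algebraMap A (Localization.Away (a i))) q := by
        rw [← hp, ← hqw, map_add, hmapw0, add_zero]
      rw [h4]
      exact Ideal.mem_map_of_mem _ hq
    have huC : IsUnit (MvPolynomial.C (algebraMap A (Localization.Away (a i)) (a i ^ t)) :
        MvPolynomial (Fin (n + 1)) (Localization.Away (a i))) := by
      refine IsUnit.map MvPolynomial.C ?_
      rw [map_pow]; exact (away_unit (a i)).pow t
    exact (Ideal.unit_mul_mem_iff_mem _ huC).mp hx'
  refine ⟨I₀, ⟨⟨hdisj, hcodisj⟩, hmapeq⟩, ?_⟩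
  rintro I' ⟨hcompl', hmap'⟩
  apply le_antisymm
  · intro x hx
    rw [hmemI₀]
    intro i
    rw [← hmap' i]
    exact Ideal.mem_map_of_mem _ hx
  · intro f hf
    have hftop : f ∈ (Submodule.restrictScalars A I') ⊔ nSpan A J := by
      rw [codisjoint_iff.mp hcompl'.codisjoint]; trivial
    obtain ⟨q, hq, w, hwN, hqw⟩ := Submodule.mem_sup.mp hftop
    have hw0 : w = 0 := by
      apply poly_eq_zero_of_localizations a ha
      intro i
      apply Submodule.disjoint_def.mp (hI i).disjoint
      · have h3 : MvPolynomial.map (algebraMap A (Localization.Away (a i))) w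
            = MvPolynomial.map (algebraMap A (Localization.Away (a i))) f
              - MvPolynomial.map (algebraMap A (Localization.Away (a i))) q := by
          rw [← hqw, map_add, add_sub_cancel_left]
        rw [Submodule.restrictScalars_mem, h3]
        refine Ideal.sub_mem _ ?_ ?_
        · exact (hmemI₀ f).mp hf i
        · rw [← hmap' i]; exact Ideal.mem_map_of_mem _ hq
      · exact nSpan_map _ hwN
    rw [← hqw, hw0, add_zero]
    exact hq
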